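/- arXiv:2412.09969 — 4 statements merged into one kernel-verified Lean document; each statement's English description precedes it below -/
import Mathlib

section
/- For k ≥ 3, the k-prism graph has injective chromatic number equal to 3 if and only if k is divisible by 3 (and otherwise its injective chromatic number is 4, i.e., it has an injective 3-colouring if and only if 3 divides k). -/
/-- `c` is an injective colouring of `G`: any two distinct vertices sharing a
common neighbour receive different colours. -/
def IsInjColoring {V α : Type} (G : SimpleGraph V) (c : V → α) : Prop :=
  ∀ u v : V, u ≠ v → (∃ w, G.Adj u w ∧ G.Adj v w) → c u ≠ c v

/-- The injective chromatic number of `G`, as an extended natural number. -/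
noncomputable def injChrom {V : Type} (G : SimpleGraph V) : ℕ∞ :=
  ⨅ n ∈ {n : ℕ | ∃ c : V → Fin n, IsInjColoring G c}, (n : ℕ∞)

/-- The `k`-prism: two `k`-cycles `u_0…u_{k−1}`, `v_0…v_{k−1}` (encoded as
`(i, 0)` and `(i, 1)`) together with the rungs `u_i v_i`. -/
def prism (k : ℕ) : SimpleGraph (Fin k × Fin 2) where
  Adj x y :=
    (x.2 = y.2 ∧ x.1 ≠ y.1 ∧
      (y.1.val = (x.1.val + 1) % k ∨ x.1.val = (y.1.val + 1) % k)) ∨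
    (x.1 = y.1 ∧ x.2 ≠ y.2)
  symm := by
    refine ⟨?_⟩
    rintro ⟨i, a⟩ ⟨j, b⟩ (⟨h1, h2, h3⟩ | ⟨h1, h2⟩)
    · exact Or.inl ⟨h1.symm, h2.symm, h3.symm⟩
    · exact Or.inr ⟨h1.symm, h2.symm⟩
  loopless := by
    refine ⟨?_⟩
    rintro ⟨i, a⟩ (⟨-, h, -⟩ | ⟨-, h⟩) <;> exact h rfl

/-!
The prism is cubic, so a colouring is injective exactly when the three neighbours of every vertex
get distinct colours; in particular at least three colours are needed. Any three consecutive
vertices of the zigzag `u_0, v_1, u_2, v_3, …` are the neighbours of one vertex, so with three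
colours the colours along the zigzag repeat with period 3. The zigzag itself has period `2k`, so
the colour sequence has period `gcd 3 (2k)`, which is 1 — absurd — unless `3 ∣ k`. Conversely,
colouring both `u_i` and `v_i` by `i mod 3` works when `3 ∣ k`, and four colours always suffice.
-/

theorem injChrom_eq_of_isLeast {V : Type} {G : SimpleGraph V} {m : ℕ}
    (h : IsLeast {n : ℕ | ∃ c : V → Fin n, IsInjColoring G c} m) : injChrom G = m :=
  le_antisymm (iInf₂_le m h.1) (le_iInf₂ fun _ hn => by exact_mod_cast h.2 hn)

theorem eq_of_ne_of_card_le_three {α : Type} [Fintype α] (hα : Fintype.card α ≤ 3)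
    {a b c d : α} (hab : a ≠ b) (hac : a ≠ c) (hbc : b ≠ c) (hdb : d ≠ b) (hdc : d ≠ c) :
    d = a := by
  classical
  by_contra hda
  have : ({a, b, c, d} : Finset α).card = 4 := by
    rw [Finset.card_insert_of_notMem, Finset.card_insert_of_notMem, Finset.card_pair hdc.symm]
      <;> simp [hab, hac, hbc, Ne.symm hda, Ne.symm hdb]
  have := Finset.card_le_univ ({a, b, c, d} : Finset α)
  omega

namespace Fin

variable {k : ℕ} [NeZero k]

theorem val_add_one_cases (i : Fin k) :
    (i + 1).val = i.val + 1 ∨ (i.val + 1 = k ∧ (i + 1).val = 0) := by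
  obtain ⟨n, rfl⟩ := Nat.exists_eq_succ_of_ne_zero (NeZero.ne k)
  rw [Fin.val_add_one]
  split_ifs with h
  · simp [h]
  · simp

theorem val_sub_one_cases (i : Fin k) :
    (i - 1).val + 1 = i.val ∨ (i.val = 0 ∧ (i - 1).val + 1 = k) := by
  obtain ⟨n, rfl⟩ := Nat.exists_eq_succ_of_ne_zero (NeZero.ne k)
  rw [Fin.coe_sub_one]
  split_ifs with h
  · simp [h]
  · have : i.val ≠ 0 := fun h0 => h (Fin.ext h0)
    omega

end Fin

section Prism

variable {k : ℕ} [NeZero k] {α : Type}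

theorem prism_adj_iff (hk : 2 ≤ k) {x y : Fin k × Fin 2} :
    (prism k).Adj x y ↔ x = (y.1 + 1, y.2) ∨ x = (y.1 - 1, y.2) ∨ x = (y.1, y.2 + 1) := by
  rcases x with ⟨i, s⟩
  rcases y with ⟨j, t⟩
  have hst : s ≠ t ↔ s = t + 1 := by revert s t; decide
  have h1 : ((1 : Fin k) : ℕ) = 1 := Nat.mod_eq_of_lt hk
  have hsucc : ∀ a b : Fin k, b.val = (a.val + 1) % k ↔ b = a + 1 := fun a b => by
    rw [Fin.ext_iff, Fin.val_add, h1]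
  simp only [prism, hsucc, hst, Prod.mk.injEq, eq_sub_iff_add_eq]
  constructor
  · rintro (⟨rfl, -, rfl | rfl⟩ | ⟨rfl, rfl⟩) <;> simp
  · rintro (⟨rfl, rfl⟩ | ⟨rfl, rfl⟩ | ⟨rfl, rfl⟩) <;> simp [show k ≠ 1 by omega]

theorem isInjColoring_prism_iff (hk : 3 ≤ k) {c : Fin k × Fin 2 → α} :
    IsInjColoring (prism k) c ↔ ∀ i s, c (i + 1, s) ≠ c (i - 1, s) ∧
      c (i + 1, s) ≠ c (i, s + 1) ∧ c (i - 1, s) ≠ c (i, s + 1) := by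
  constructor
  · intro hc i s
    have hne : i + 1 ≠ i - 1 := by
      rw [Ne, Fin.ext_iff]
      have := i.val_add_one_cases
      have := i.val_sub_one_cases
      omega
    have hs : s + 1 ≠ s := by revert s; decide
    have adj := fun x => (prism_adj_iff (x := x) (y := (i, s)) (by omega)).2
    refine ⟨hc _ _ ?_ ⟨_, adj _ (.inl rfl), adj _ (.inr (.inl rfl))⟩,
      hc _ _ ?_ ⟨_, adj _ (.inl rfl), adj _ (.inr (.inr rfl))⟩,
      hc _ _ ?_ ⟨_, adj _ (.inr (.inl rfl)), adj _ (.inr (.inr rfl))⟩⟩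
    all_goals simp [Prod.ext_iff, hne, hs.symm]
  · rintro h u v huv ⟨w, hu, hv⟩
    obtain ⟨h₁, h₂, h₃⟩ := h w.1 w.2
    rw [prism_adj_iff (by omega)] at hu hv
    rcases hu with rfl | rfl | rfl <;> rcases hv with rfl | rfl | rfl <;>
      first | exact absurd rfl huv | assumption | exact Ne.symm ‹_›

theorem three_le_card_of_isInjColoring_prism [Fintype α] (hk : 3 ≤ k)
    {c : Fin k × Fin 2 → α} (hc : IsInjColoring (prism k) c) : 3 ≤ Fintype.card α := by
  obtain ⟨h₁, h₂, h₃⟩ := (isInjColoring_prism_iff hk).1 hc 0 0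
  exact Fintype.two_lt_card_iff.2 ⟨_, _, _, h₁, h₂, h₃⟩

/-- The zigzag `u_0, v_1, u_2, v_3, …`, read modulo `k`. -/
def prismZigzag (k : ℕ) [NeZero k] (j : ℕ) : Fin k × Fin 2 :=
  (⟨j % k, Nat.mod_lt _ (Nat.pos_of_neZero k)⟩, ⟨j % 2, Nat.mod_lt _ two_pos⟩)

theorem prismZigzag_succ (j : ℕ) :
    prismZigzag k (j + 1) = ((prismZigzag k j).1 + 1, (prismZigzag k j).2 + 1) := by
  simp [prismZigzag, Prod.ext_iff, Fin.ext_iff, Fin.val_add, Nat.add_mod]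

theorem prismZigzag_add_two_mul (j : ℕ) : prismZigzag k (j + 2 * k) = prismZigzag k j := by
  simp [prismZigzag, Nat.add_mul_mod_self_left, Nat.add_mul_mod_self_right]

theorem three_dvd_of_isInjColoring_prism [Fintype α] (hα : Fintype.card α ≤ 3) (hk : 3 ≤ k)
    {c : Fin k × Fin 2 → α} (hc : IsInjColoring (prism k) c) : 3 ∣ k := by
  set x : ℕ → α := fun j => c (prismZigzag k j)
  have hx : ∀ j, x j ≠ x (j + 1) ∧ x j ≠ x (j + 2) ∧ x (j + 1) ≠ x (j + 2) := by
    intro j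
    obtain ⟨h₁, h₂, h₃⟩ :=
      (isInjColoring_prism_iff hk).1 hc ((prismZigzag k j).1 + 1) (prismZigzag k j).2
    have hs : ∀ s : Fin 2, s + 1 + 1 = s := by decide
    simp only [add_sub_cancel_right, Prod.mk.eta] at h₁ h₂ h₃
    simp only [x, show j + 2 = j + 1 + 1 from rfl, prismZigzag_succ, hs]
    exact ⟨h₃, h₁.symm, h₂.symm⟩
  have hx3 : Function.Periodic x 3 := fun j =>
    eq_of_ne_of_card_le_three hα (hx j).1 (hx j).2.1 (hx j).2.2
      (hx (j + 1)).2.1.symm (hx (j + 1)).2.2.symm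
  have hx2k : x ((2 * k) % 3) = x 0 := by
    rw [hx3.map_mod_nat, ← zero_add (2 * k)]
    exact congrArg c (prismZigzag_add_two_mul 0)
  by_contra h
  have : 2 * k % 3 = 1 ∨ 2 * k % 3 = 2 := by omega
  rcases this with h' | h' <;> rw [h'] at hx2k
  exacts [(hx 0).1 hx2k.symm, (hx 0).2.1 hx2k.symm]

theorem exists_isInjColoring_prism_fin_three (hk : 3 ≤ k) (h3 : 3 ∣ k) :
    ∃ c : Fin k × Fin 2 → Fin 3, IsInjColoring (prism k) c := by
  refine ⟨fun x => ⟨x.1.val % 3, Nat.mod_lt _ three_pos⟩, (isInjColoring_prism_iff hk).2 ?_⟩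
  intro i s
  simp only [Ne, Fin.ext_iff]
  have := i.val_add_one_cases
  have := i.val_sub_one_cases
  omega

theorem exists_isInjColoring_prism_fin_four (hk : 4 ≤ k) :
    ∃ c : Fin k × Fin 2 → Fin 4, IsInjColoring (prism k) c := by
  -- `φ` grows by one per step except at the first `k % 4` odd steps, so it never stalls twice in
  -- a row and gains `k - k % 4 ≡ 0 [MOD 4]` around the cycle.
  let φ : ℕ → ℕ := fun i => i - min (i / 2) (k % 4)
  refine ⟨fun x => ⟨(φ x.1.val + 2 * x.2.val) % 4, Nat.mod_lt _ four_pos⟩,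
    (isInjColoring_prism_iff (by omega)).2 ?_⟩
  intro i s
  have hs : ((s + 1 : Fin 2) : ℕ) = 1 - s := by revert s; decide
  simp only [Ne, Fin.ext_iff, hs, φ]
  have := i.val_add_one_cases
  have := i.val_sub_one_cases
  have := s.isLt
  omega

end Prism

/-- For `k ≥ 3`, the `k`-prism has injective chromatic number 3 if and only if
`3 ∣ k`, and otherwise its injective chromatic number is 4. -/
theorem prism_injChrom (k : ℕ) (hk : 3 ≤ k) :
    (injChrom (prism k) = 3 ↔ 3 ∣ k) ∧ (¬ 3 ∣ k → injChrom (prism k) = 4) := by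
  have : NeZero k := ⟨by omega⟩
  have eq_three (h : 3 ∣ k) : injChrom (prism k) = 3 :=
    injChrom_eq_of_isLeast ⟨exists_isInjColoring_prism_fin_three hk h, fun n ⟨_, hc⟩ => by
      simpa using three_le_card_of_isInjColoring_prism hk hc⟩
  have eq_four (h : ¬ 3 ∣ k) : injChrom (prism k) = 4 :=
    injChrom_eq_of_isLeast (m := 4) ⟨exists_isInjColoring_prism_fin_four (by omega),
      fun n ⟨_, hc⟩ => not_lt.1 fun hn =>
        h (three_dvd_of_isInjColoring_prism (by simp; omega) hk hc)⟩
  refine ⟨⟨fun h3 => ?_, eq_three⟩, eq_four⟩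
  by_contra h
  simp [eq_four h] at h3
end

section
/- For r ≥ 5, the generalised dodecahedron D_r admits an injective 3-colouring if and only if r ≡ 0 (mod 3); hence χ_i(D_r) = 4 if and only if r is not divisible by 3. -/
/-- One orientation of the edges of the generalised dodecahedron `D_r`.
Vertices are encoded as `(i, t)` with `t = 0` for `u_i`, `t = 1` for `v_i`,
`t = 2` for `u'_i` and `t = 3` for `v'_i`; indices are modulo `r`. -/
def dodecRel (r : ℕ) (x y : Fin r × Fin 4) : Prop :=
  (x.2.val = 0 ∧ y.2.val = 0 ∧ y.1.val = (x.1.val + 1) % r) ∨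
  (x.2.val = 1 ∧ y.2.val = 1 ∧ y.1.val = (x.1.val + 1) % r) ∨
  (x.2.val = 0 ∧ y.2.val = 2 ∧ y.1 = x.1) ∨
  (x.2.val = 1 ∧ y.2.val = 3 ∧ y.1 = x.1) ∨
  (x.2.val = 3 ∧ y.2.val = 2 ∧ y.1 = x.1) ∨
  (x.2.val = 2 ∧ y.2.val = 3 ∧ y.1.val = (x.1.val + 1) % r)

/-- The generalised dodecahedron `D_r`. -/
def genDodec (r : ℕ) : SimpleGraph (Fin r × Fin 4) where
  Adj x y := x ≠ y ∧ (dodecRel r x y ∨ dodecRel r y x)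
  symm := ⟨by
    rintro x y ⟨h1, h2⟩
    exact ⟨h1.symm, h2.symm⟩⟩
  loopless := ⟨fun x h => h.1 rfl⟩

/-!
In a cubic graph, an injective colouring with three colours gives every vertex exactly one
neighbour of each colour, so double counting puts a third of the vertices in each colour class;
as `D_r` has `4r` vertices, `3 ∣ r`. Conversely, when `3 ∣ r`, colouring `u_i, u'_i` by `i` and
`v_i, v'_i` by `i + 1` modulo 3 is injective. Otherwise this colouring fails only where the
index wraps around, and recolouring the last two columns with a fourth colour repairs it.
-/

namespace IsInjColoring

variable {V α β : Type} {G : SimpleGraph V}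

lemma comp {c : V → α} (hc : IsInjColoring G c) {f : α → β} (hf : Function.Injective f) :
    IsInjColoring G (f ∘ c) :=
  fun u v huv hw h => hc u v huv hw (hf h)

lemma of_comp {c : V → α} {f : α → β} (hc : IsInjColoring G (f ∘ c)) : IsInjColoring G c :=
  fun u v huv hw h => hc u v huv hw (congrArg f h)

lemma injOn_neighborSet {c : V → α} (hc : IsInjColoring G c) (w : V) :
    Set.InjOn c (G.neighborSet w) :=
  fun u hu v hv h => by_contra fun huv => hc u v huv ⟨w, G.adj_symm hu, G.adj_symm hv⟩ h

theorem dvd_card_of_isRegularOfDegree [Fintype V] [DecidableRel G.Adj] {k : ℕ}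
    (hG : G.IsRegularOfDegree k) {c : V → Fin k} (hc : IsInjColoring G c) :
    k ∣ Fintype.card V := by
  classical
  rcases isEmpty_or_nonempty V with _ | ⟨⟨v₀⟩⟩
  · simp
  set a := c v₀
  have one_nbr (w : V) :
      (Finset.bipartiteAbove G.Adj (Finset.univ.filter (c · = a)) w).card = 1 := by
    have hinj : Set.InjOn c (G.neighborFinset w) := by
      simpa using hc.injOn_neighborSet w
    have himage : (G.neighborFinset w).image c = Finset.univ :=
      Finset.eq_univ_of_card _ (by rw [Finset.card_image_of_injOn hinj, Fintype.card_fin,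
        G.card_neighborFinset_eq_degree, hG w])
    obtain ⟨v, hv, hva⟩ := Finset.mem_image.mp (himage ▸ Finset.mem_univ a)
    rw [Finset.card_eq_one]
    refine ⟨v, Finset.eq_singleton_iff_unique_mem.mpr ⟨by simpa [hva] using hv, ?_⟩⟩
    intro u hu
    simp only [Finset.bipartiteAbove, Finset.mem_filter, Finset.mem_univ, true_and] at hu
    exact hinj (by simpa using hu.2) (by simpa using hv) (hu.1.trans hva.symm)
  have hcount := Finset.card_mul_eq_card_mul G.Adj (s := Finset.univ)
    (t := Finset.univ.filter (c · = a)) (m := 1) (n := k) (fun w _ => one_nbr w)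
    (fun v _ => by
      simp only [Finset.bipartiteBelow, G.adj_comm _ v]
      rw [← G.neighborFinset_eq_filter, G.card_neighborFinset_eq_degree, hG v])
  exact ⟨_, by simpa [mul_comm] using hcount⟩

end IsInjColoring

lemma injChrom_le {V : Type} {G : SimpleGraph V} {n : ℕ} {c : V → Fin n}
    (hc : IsInjColoring G c) : injChrom G ≤ n :=
  iInf₂_le n ⟨c, hc⟩

lemma injChrom_eq_succ {V : Type} {G : SimpleGraph V} {k : ℕ}
    (hcol : ∃ c : V → Fin (k + 1), IsInjColoring G c)
    (hnot : ¬ ∃ c : V → Fin k, IsInjColoring G c) : injChrom G = k + 1 := by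
  obtain ⟨c, hc⟩ := hcol
  refine le_antisymm (by exact_mod_cast injChrom_le hc) (le_iInf₂ fun n ⟨c', hc'⟩ => ?_)
  by_contra hlt
  have hn : n ≤ k := by
    rw [not_le] at hlt
    exact_mod_cast Order.le_of_lt_add_one hlt
  exact hnot ⟨Fin.castLE hn ∘ c', hc'.comp (Fin.castLE_injective hn)⟩

namespace Fin

variable {r : ℕ} [NeZero r]

lemma val_add_one_eq_ite (i : Fin r) : (i + 1).val = if i.val + 1 = r then 0 else i.val + 1 := by
  obtain ⟨n, rfl⟩ := Nat.exists_eq_succ_of_ne_zero (NeZero.ne r)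
  simp only [Fin.val_add_one, Fin.ext_iff, Fin.val_last]
  grind

lemma val_sub_one_eq_ite (i : Fin r) : (i - 1).val = if i.val = 0 then r - 1 else i.val - 1 := by
  obtain ⟨n, rfl⟩ := Nat.exists_eq_succ_of_ne_zero (NeZero.ne r)
  simp only [Fin.coe_sub_one, Fin.ext_iff, Fin.val_zero]
  grind

lemma val_eq_add_one_mod_iff {i j : Fin r} : j.val = (i.val + 1) % r ↔ j = i + 1 := by
  rw [Fin.ext_iff, Fin.val_add, Fin.val_one', Nat.add_mod_mod]

lemma natCast_val_add_one_of_dvd {m : ℕ} (hm : m ∣ r) (i : Fin r) :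
    ((i + 1).val : ZMod m) = i.val + 1 := by
  rw [val_add_one_eq_ite]
  split_ifs with h
  · rw [Nat.cast_zero, ← Nat.cast_one, ← Nat.cast_add, h,
      (ZMod.natCast_eq_zero_iff r m).mpr hm]
  · push_cast; rfl

lemma natCast_val_sub_one_of_dvd {m : ℕ} (hm : m ∣ r) (i : Fin r) :
    ((i - 1).val : ZMod m) = i.val - 1 := by
  rw [eq_sub_iff_add_eq, ← natCast_val_add_one_of_dvd hm, sub_add_cancel]

end Fin

section

variable {r : ℕ} [NeZero r]

def genDodecNbrs : Fin r × Fin 4 → List (Fin r × Fin 4)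
  | (i, 0) => [(i + 1, 0), (i - 1, 0), (i, 2)]
  | (i, 1) => [(i + 1, 1), (i - 1, 1), (i, 3)]
  | (i, 2) => [(i, 0), (i, 3), (i + 1, 3)]
  | (i, 3) => [(i, 1), (i, 2), (i - 1, 2)]

lemma mem_genDodecNbrs_of_adj {x y : Fin r × Fin 4} (h : (genDodec r).Adj x y) :
    y ∈ genDodecNbrs x := by
  obtain ⟨i, t⟩ := x; obtain ⟨j, s⟩ := y
  fin_cases t <;> fin_cases s <;>
    simp [genDodec, dodecRel, genDodecNbrs, Fin.val_eq_add_one_mod_iff, eq_sub_iff_add_eq]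
      at h ⊢ <;>
    grind

lemma genDodec_adj_of_mem_genDodecNbrs (hr : 2 ≤ r) {x y : Fin r × Fin 4}
    (h : y ∈ genDodecNbrs x) : (genDodec r).Adj x y := by
  have h1 : (1 : Fin r) ≠ 0 := by rw [Ne, Fin.one_eq_zero_iff]; omega
  obtain ⟨i, t⟩ := x; obtain ⟨j, s⟩ := y
  fin_cases t <;> fin_cases s <;>
    simp [genDodec, dodecRel, genDodecNbrs, Fin.val_eq_add_one_mod_iff, eq_sub_iff_add_eq]
      at h ⊢ <;>
    grind

lemma genDodecNbrs_nodup (hr : 3 ≤ r) (x : Fin r × Fin 4) : (genDodecNbrs x).Nodup := by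
  have h2 : (1 : Fin r) + 1 ≠ 0 := by
    rw [Ne, Fin.ext_iff, Fin.val_add, Fin.val_one', Fin.val_zero,
      Nat.mod_eq_of_lt (by omega : 1 < r), Nat.mod_eq_of_lt (by omega)]
    omega
  have hsucc_succ (i : Fin r) : i + 1 + 1 ≠ i := fun h =>
    h2 (add_eq_left.mp ((add_assoc i 1 1).symm.trans h))
  obtain ⟨i, t⟩ := x
  fin_cases t <;>
    simp [genDodecNbrs, hsucc_succ, eq_sub_iff_add_eq, Fin.one_eq_zero_iff, show r ≠ 1 by omega]

theorem genDodec_isRegularOfDegree (hr : 3 ≤ r) [DecidableRel (genDodec r).Adj] :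
    (genDodec r).IsRegularOfDegree 3 := by
  intro x
  have hnbrs : (genDodec r).neighborFinset x = (genDodecNbrs x).toFinset := by
    ext y
    rw [SimpleGraph.mem_neighborFinset, List.mem_toFinset]
    exact ⟨mem_genDodecNbrs_of_adj, genDodec_adj_of_mem_genDodecNbrs (by omega)⟩
  rw [← SimpleGraph.card_neighborFinset_eq_degree, hnbrs,
    List.toFinset_card_of_nodup (genDodecNbrs_nodup hr x)]
  obtain ⟨i, t⟩ := x
  fin_cases t <;> rfl

theorem isInjColoring_genDodec_of_nodup {α : Type} {c : Fin r × Fin 4 → α}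
    (hc : ∀ x, ((genDodecNbrs x).map c).Nodup) : IsInjColoring (genDodec r) c :=
  fun _ _ huv ⟨w, hu, hv⟩ h => huv <| List.inj_on_of_nodup_map (hc w)
    (mem_genDodecNbrs_of_adj ((genDodec r).adj_symm hu))
    (mem_genDodecNbrs_of_adj ((genDodec r).adj_symm hv)) h

end

def stripeColoring (r : ℕ) (x : Fin r × Fin 4) : ZMod 3 := x.1.val + ![0, 1, 0, 1] x.2

theorem isInjColoring_stripeColoring {r : ℕ} [NeZero r] (h3 : 3 ∣ r) :
    IsInjColoring (genDodec r) (stripeColoring r) := by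
  refine isInjColoring_genDodec_of_nodup fun ⟨i, t⟩ => ?_
  fin_cases t <;>
    simp only [genDodecNbrs, List.map, stripeColoring, Fin.natCast_val_add_one_of_dvd h3,
      Fin.natCast_val_sub_one_of_dvd h3] <;>
    generalize (i.val : ZMod 3) = a <;> revert a <;> decide

def seamColor (r i : ℕ) (t : Fin 4) : ℕ :=
  if i + 2 < r then (i + t.val % 2) % 3
  else if i + 2 = r then (if r % 3 = 1 then ![2, 3, 2, 3] else ![3, 3, 0, 1]) t
  else (if r % 3 = 1 then ![3, 0, 3, 0] else ![3, 3, 2, 0]) t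

lemma seamColor_lt_four (r i : ℕ) (t : Fin 4) : seamColor r i t < 4 := by
  unfold seamColor
  split_ifs <;> fin_cases t <;> simp <;> omega

set_option maxHeartbeats 400000 in
theorem isInjColoring_seamColor {r : ℕ} [NeZero r] (hr : 4 ≤ r) (h3 : ¬ 3 ∣ r) :
    IsInjColoring (genDodec r) (fun x => seamColor r x.1.val x.2) := by
  refine isInjColoring_genDodec_of_nodup fun ⟨i, t⟩ => ?_
  have := i.isLt
  fin_cases t <;>
    simp only [genDodecNbrs, List.map, seamColor, Fin.val_add_one_eq_ite,
      Fin.val_sub_one_eq_ite] <;>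
    split_ifs <;> simp <;> omega

theorem three_dvd_of_isInjColoring_genDodec {r : ℕ} (hr : 3 ≤ r) {c : Fin r × Fin 4 → Fin 3}
    (hc : IsInjColoring (genDodec r) c) : 3 ∣ r := by
  classical
  have : NeZero r := ⟨by omega⟩
  have h := hc.dvd_card_of_isRegularOfDegree (genDodec_isRegularOfDegree hr)
  rw [Fintype.card_prod, Fintype.card_fin, Fintype.card_fin] at h
  exact Nat.Coprime.dvd_of_dvd_mul_right (by norm_num) h

theorem exists_isInjColoring_genDodec_fin_three {r : ℕ} [NeZero r] (h3 : 3 ∣ r) :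
    ∃ c : Fin r × Fin 4 → Fin 3, IsInjColoring (genDodec r) c :=
  ⟨(ZMod.finEquiv 3).symm ∘ stripeColoring r,
    (isInjColoring_stripeColoring h3).comp (ZMod.finEquiv 3).symm.injective⟩

theorem exists_isInjColoring_genDodec_fin_four {r : ℕ} (hr : 4 ≤ r) (h3 : ¬ 3 ∣ r) :
    ∃ c : Fin r × Fin 4 → Fin 4, IsInjColoring (genDodec r) c := by
  have : NeZero r := ⟨by omega⟩
  exact ⟨fun x => ⟨seamColor r x.1.val x.2, seamColor_lt_four r _ _⟩,
    (isInjColoring_seamColor hr h3).of_comp (f := Fin.val)⟩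

/-- For `r ≥ 5`, the generalised dodecahedron `D_r` admits an injective
3-colouring iff `3 ∣ r`; hence `χ_i(D_r) = 4` iff `r` is not divisible by 3. -/
theorem genDodec_injChrom (r : ℕ) (hr : 5 ≤ r) :
    ((∃ c : Fin r × Fin 4 → Fin 3, IsInjColoring (genDodec r) c) ↔ 3 ∣ r) ∧
    (injChrom (genDodec r) = 4 ↔ ¬ 3 ∣ r) := by
  have : NeZero r := ⟨by omega⟩
  have three_colorable :
      (∃ c : Fin r × Fin 4 → Fin 3, IsInjColoring (genDodec r) c) ↔ 3 ∣ r :=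
    ⟨fun ⟨_, hc⟩ => three_dvd_of_isInjColoring_genDodec (by omega) hc,
      exists_isInjColoring_genDodec_fin_three⟩
  refine ⟨three_colorable, ?_⟩
  by_cases h3 : 3 ∣ r
  · obtain ⟨c, hc⟩ := exists_isInjColoring_genDodec_fin_three h3
    exact iff_of_false (fun h => absurd (h ▸ injChrom_le hc) (by norm_num)) (not_not.mpr h3)
  · exact iff_of_true (injChrom_eq_succ (exists_isInjColoring_genDodec_fin_four (by omega) h3)
      (three_colorable.not.mpr h3)) h3
end

section
/- Let H be a 3-connected graph, let uvw be a triangle in H, and let H' be obtained from H by subdividing the edge uv with a new vertex w' and adding the edge ww'. Then H' is 3-connected. -/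
/-- A graph is 3-connected: it has at least 4 vertices and remains connected
after deleting any two vertices. -/
def ThreeConnected {V : Type} (G : SimpleGraph V) : Prop :=
  4 ≤ Nat.card V ∧ G.Connected ∧
    ∀ a b : V, (G.induce {x : V | x ≠ a ∧ x ≠ b}).Connected

/-- The graph obtained from `G` by subdividing the edge `u v` with a new vertex
`none` and adding an edge from `w` to the new vertex. Old vertices are encoded
via `some`. -/
def subdivideAdd {V : Type} (G : SimpleGraph V) (u v w : V) :
    SimpleGraph (Option V) where
  Adj x y :=
    (∃ a b : V, x = some a ∧ y = some b ∧ G.Adj a b ∧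
      ¬(a = u ∧ b = v) ∧ ¬(a = v ∧ b = u)) ∨
    (x = none ∧ ∃ b : V, y = some b ∧ (b = u ∨ b = v ∨ b = w)) ∨
    (y = none ∧ ∃ a : V, x = some a ∧ (a = u ∨ a = v ∨ a = w))
  symm := ⟨by
    rintro x y (⟨a, b, rfl, rfl, hab, h1, h2⟩ | ⟨rfl, b, rfl, hb⟩ | ⟨rfl, a, rfl, ha⟩)
    · exact Or.inl ⟨b, a, rfl, rfl, hab.symm, fun h => h2 ⟨h.2, h.1⟩, fun h => h1 ⟨h.2, h.1⟩⟩
    · exact Or.inr (Or.inr ⟨rfl, b, rfl, hb⟩)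
    · exact Or.inr (Or.inl ⟨rfl, a, rfl, ha⟩)⟩
  loopless := ⟨by
    rintro x (⟨a, b, rfl, hb, hab, -, -⟩ | ⟨rfl, b, hb, -⟩ | ⟨rfl, a, ha, -⟩)
    · rw [Option.some_inj] at hb; subst hb; exact G.loopless.irrefl a hab
    · cases hb
    · cases ha⟩

/-!
Delete two vertices `a, b` of `H' = subdivideAdd G u v w`, whose new vertex is `none`.
If both are old, `G - {a, b}` is connected, and each of its edges either survives in
`H' - {a, b}` or is replaced by the path `u, none, v`; the new vertex keeps one of its three
distinct neighbours `u, v, w`. If `none` is deleted together with an old vertex `c ≠ v`, every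
old vertex is joined to `v` inside `G - {c, u}`, which avoids the edge `u v`, and `u` is
attached through one of its (at least three) neighbours outside `{c, v}`; the case `c = v` is the same with `u` and `v`
swapped. Deleting `none` alone is the union of the cases `c = u` and `c = v`, which share `w`.
Finally `H'` is connected, since any two of its vertices survive the deletion of a third.
-/

open SimpleGraph

lemma exists_notMem_of_card_lt {α : Type*} {s : Finset α} (h : s.card < Nat.card α) :
    ∃ x, x ∉ s := by
  classical
  have : Finite α := Nat.finite_of_card_ne_zero (by omega)
  have := Fintype.ofFinite α
  rw [Nat.card_eq_fintype_card, ← Finset.card_univ] at h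
  obtain ⟨x, -, hx⟩ := Finset.exists_mem_notMem_of_card_lt_card h
  exact ⟨x, hx⟩

lemma SimpleGraph.connected_of_forall_induce_connected {α : Type*} {H : SimpleGraph α}
    (hcard : 3 ≤ Nat.card α) (h : ∀ a b : α, (H.induce {x | x ≠ a ∧ x ≠ b}).Connected) :
    H.Connected := by
  classical
  have : Nonempty α := (Nat.card_pos_iff.mp (by omega)).1
  refine ⟨fun x y => ?_⟩
  obtain ⟨a, ha⟩ := exists_notMem_of_card_lt (s := {x, y}) (Finset.card_le_two.trans_lt hcard)
  simp only [Finset.mem_insert, Finset.mem_singleton, not_or] at ha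
  exact ((h a a).preconnected ⟨x, Ne.symm ha.1, Ne.symm ha.1⟩
    ⟨y, Ne.symm ha.2, Ne.symm ha.2⟩).map (Embedding.induce _).toHom

variable {V : Type} {G : SimpleGraph V} {u v w : V}

lemma ThreeConnected.exists_adj_ne (h3 : ThreeConnected G) {x c d : V} (hxc : x ≠ c)
    (hxd : x ≠ d) : ∃ z, G.Adj x z ∧ z ≠ c ∧ z ≠ d := by
  classical
  obtain ⟨y, hy⟩ := exists_notMem_of_card_lt (s := {x, c, d})
    (Finset.card_le_three.trans_lt h3.1)
  simp only [Finset.mem_insert, Finset.mem_singleton, not_or] at hy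
  have : Nontrivial {z | z ≠ c ∧ z ≠ d} :=
    nontrivial_of_ne ⟨x, hxc, hxd⟩ ⟨y, hy.2⟩ fun h => hy.1 (congrArg Subtype.val h).symm
  obtain ⟨z, hz⟩ := (h3.2.2 c d).preconnected.exists_adj_of_nontrivial ⟨x, hxc, hxd⟩
  exact ⟨z, hz, z.2⟩

lemma subdivideAdd_adj_some_some {a b : V} :
    (subdivideAdd G u v w).Adj (some a) (some b) ↔
      G.Adj a b ∧ ¬(a = u ∧ b = v) ∧ ¬(a = v ∧ b = u) := by
  simp [subdivideAdd]

lemma subdivideAdd_adj_none_some {b : V} :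
    (subdivideAdd G u v w).Adj none (some b) ↔ b = u ∨ b = v ∨ b = w := by
  simp [subdivideAdd]

lemma subdivideAdd_comm : subdivideAdd G u v w = subdivideAdd G v u w := by
  ext x y
  cases x <;> cases y <;> simp [subdivideAdd] <;> tauto

lemma reachable_induce_subdivideAdd_of_adj {T : Set (Option V)} {a b : V} (ha : some a ∈ T)
    (hb : some b ∈ T) (hab : G.Adj a b) (hT : none ∈ T ∨ ¬(a = u ∧ b = v) ∧ ¬(a = v ∧ b = u)) :
    ((subdivideAdd G u v w).induce T).Reachable ⟨some a, ha⟩ ⟨some b, hb⟩ := by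
  by_cases hedge : (a = u ∧ b = v) ∨ (a = v ∧ b = u)
  · have hnone : none ∈ T := hT.resolve_right (by tauto)
    have ha' : ((subdivideAdd G u v w).induce T).Adj ⟨some a, ha⟩ ⟨none, hnone⟩ :=
      (subdivideAdd_adj_none_some.2 (by tauto) : (subdivideAdd G u v w).Adj none (some a)).symm
    have hb' : ((subdivideAdd G u v w).induce T).Adj ⟨none, hnone⟩ ⟨some b, hb⟩ :=
      subdivideAdd_adj_none_some.2 (by tauto)
    exact ha'.reachable.trans hb'.reachable
  · exact Adj.reachable (subdivideAdd_adj_some_some.2 ⟨hab, by tauto⟩)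

/-- A walk of `G` inside `s` becomes a walk of the subdivided graph inside `T`, detouring
through the new vertex whenever it uses the edge `u v`. -/
lemma SimpleGraph.Reachable.subdivideAdd_induce {s : Set V} {T : Set (Option V)}
    (hsT : ∀ x ∈ s, some x ∈ T) (hT : none ∈ T ∨ u ∉ s ∨ v ∉ s) {x y : s}
    (h : (G.induce s).Reachable x y) :
    ((subdivideAdd G u v w).induce T).Reachable ⟨some x, hsT x x.2⟩ ⟨some y, hsT y y.2⟩ := by
  rw [reachable_iff_reflTransGen] at h ⊢
  refine Relation.ReflTransGen.lift' (fun z : s => (⟨some z, hsT z z.2⟩ : T))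
    (fun a b hab => ?_) _ _ h
  rw [Function.onFun, ← reachable_iff_reflTransGen]
  refine reachable_induce_subdivideAdd_of_adj _ _ hab (hT.imp_right fun h => ?_)
  have := a.2
  have := b.2
  constructor <;> rintro ⟨rfl, rfl⟩ <;> tauto

lemma ThreeConnected.connected_induce_subdivideAdd_some_some (h3 : ThreeConnected G)
    (huv : u ≠ v) (hvw : v ≠ w) (huw : u ≠ w) (c d : V) :
    ((subdivideAdd G u v w).induce {x | x ≠ some c ∧ x ≠ some d}).Connected := by
  classical
  obtain ⟨t, ht, htcd⟩ := Finset.exists_mem_notMem_of_card_lt_card (s := {c, d})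
    (t := {u, v, w}) (Finset.card_le_two.trans_lt
      (Finset.card_eq_three.2 ⟨u, v, w, huv, huw, hvw, rfl⟩).symm.le)
  simp only [Finset.mem_insert, Finset.mem_singleton, not_or] at ht htcd
  obtain ⟨htc, htd⟩ := htcd
  set T := {x : Option V | x ≠ some c ∧ x ≠ some d}
  have hnone : none ∈ T := ⟨nofun, nofun⟩
  have hT : ∀ x, x ≠ c → x ≠ d → some x ∈ T := fun x hxc hxd =>
    ⟨fun h => hxc (Option.some_injective _ h), fun h => hxd (Option.some_injective _ h)⟩
  have hnt : ((subdivideAdd G u v w).induce T).Adj ⟨none, hnone⟩ ⟨some t, hT t htc htd⟩ :=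
    subdivideAdd_adj_none_some.2 ht
  rw [connected_iff_exists_forall_reachable]
  refine ⟨⟨none, hnone⟩, ?_⟩
  rintro ⟨_ | x, hx⟩
  · rfl
  have hxc : x ≠ c := fun h => hx.1 (congrArg some h)
  have hxd : x ≠ d := fun h => hx.2 (congrArg some h)
  exact hnt.reachable.trans <| ((h3.2.2 c d).preconnected ⟨t, htc, htd⟩ ⟨x, hxc, hxd⟩)
    |>.subdivideAdd_induce (fun x hx => hT x hx.1 hx.2) (Or.inl hnone)

lemma ThreeConnected.connected_induce_subdivideAdd_none_some_of_ne (h3 : ThreeConnected G)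
    (huv : u ≠ v) {c : V} (hvc : v ≠ c) :
    ((subdivideAdd G u v w).induce {x | x ≠ none ∧ x ≠ some c}).Connected := by
  set T := {x : Option V | x ≠ none ∧ x ≠ some c}
  have hT : ∀ x, x ≠ c → some x ∈ T := fun x hxc =>
    ⟨nofun, fun h => hxc (Option.some_injective _ h)⟩
  have reach : ∀ x (hxc : x ≠ c), x ≠ u →
      ((subdivideAdd G u v w).induce T).Reachable ⟨some x, hT x hxc⟩ ⟨some v, hT v hvc⟩ :=
    fun x hxc hxu => ((h3.2.2 c u).preconnected ⟨x, hxc, hxu⟩ ⟨v, hvc, huv.symm⟩)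
      |>.subdivideAdd_induce (fun x hx => hT x hx.1) (Or.inr (Or.inl fun h => h.2 rfl))
  rw [connected_iff_exists_forall_reachable]
  refine ⟨⟨some v, hT v hvc⟩, ?_⟩
  rintro ⟨_ | x, hx⟩
  · exact absurd rfl hx.1
  have hxc : x ≠ c := fun h => hx.2 (congrArg some h)
  symm
  by_cases hxu : x = u
  · subst hxu
    obtain ⟨z, hxz, hzc, hzv⟩ := h3.exists_adj_ne hxc huv
    exact (reachable_induce_subdivideAdd_of_adj _ (hT z hzc) hxz (Or.inr (by tauto))).trans
      (reach z hzc hxz.ne')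
  · exact reach x hxc hxu

lemma ThreeConnected.connected_induce_subdivideAdd_none_some (h3 : ThreeConnected G)
    (huv : u ≠ v) (c : V) :
    ((subdivideAdd G u v w).induce {x | x ≠ none ∧ x ≠ some c}).Connected := by
  by_cases hvc : v = c
  · rw [subdivideAdd_comm]
    exact h3.connected_induce_subdivideAdd_none_some_of_ne huv.symm (hvc ▸ huv)
  · exact h3.connected_induce_subdivideAdd_none_some_of_ne huv hvc

lemma ThreeConnected.connected_induce_subdivideAdd_none_none (h3 : ThreeConnected G)
    (huv : u ≠ v) (hvw : v ≠ w) (huw : u ≠ w) :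
    ((subdivideAdd G u v w).induce {x | x ≠ none ∧ x ≠ none}).Connected := by
  have hsplit : {x : Option V | x ≠ none ∧ x ≠ none} =
      {x | x ≠ none ∧ x ≠ some u} ∪ {x | x ≠ none ∧ x ≠ some v} := by
    ext (_ | x) <;> simp only [Set.mem_ofPred_eq, Set.mem_union] <;> grind
  rw [hsplit]
  exact induce_union_connected (h3.connected_induce_subdivideAdd_none_some huv u).preconnected
    (h3.connected_induce_subdivideAdd_none_some huv v).preconnected
    ⟨some w, ⟨nofun, by simpa using huw.symm⟩, ⟨nofun, by simpa using hvw.symm⟩⟩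

/-- If `H` is 3-connected and `u v w` is a triangle of `H`, then the graph
obtained by subdividing the edge `u v` with a new vertex `w'` and adding the
edge `w w'` is 3-connected. -/
theorem subdivideAdd_threeConnected {V : Type} (G : SimpleGraph V) (u v w : V)
    (h3 : ThreeConnected G) (huv : G.Adj u v) (hvw : G.Adj v w) (huw : G.Adj u w) :
    ThreeConnected (subdivideAdd G u v w) := by
  have : Finite V := Nat.finite_of_card_ne_zero (by have := h3.1; omega)
  have hcard : 4 ≤ Nat.card (Option V) := by
    have := h3.1
    rw [Finite.card_option]
    omega
  have hdel : ∀ a b : Option V,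
      ((subdivideAdd G u v w).induce {x | x ≠ a ∧ x ≠ b}).Connected := by
    rintro (_ | c) (_ | d)
    · exact h3.connected_induce_subdivideAdd_none_none huv.ne hvw.ne huw.ne
    · exact h3.connected_induce_subdivideAdd_none_some huv.ne d
    · rw [show {x | x ≠ some c ∧ x ≠ none} = {x | x ≠ none ∧ x ≠ some c} from
        Set.ext fun _ => and_comm]
      exact h3.connected_induce_subdivideAdd_none_some huv.ne c
    · exact h3.connected_induce_subdivideAdd_some_some huv.ne hvw.ne huw.ne c d
  exact ⟨hcard, connected_of_forall_induce_connected (by omega) hdel, hdel⟩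
end

section
/- For r ≥ 5 with r ≡ 0 (mod 3), the generalised dodecahedron D_r admits an injective 3-colouring: assigning to v_i, v'_i the colour (i mod 3), and to u'_i the unique colour in {0,1,2} different from (i mod 3) and ((i+1) mod 3), and colouring the u-cycle consistently, yields an injective 3-colouring. -/
/-! Since `3 ∣ r`, reducing indices modulo 3 is a graph homomorphism `D_r → D_3` which is
injective on every neighbourhood: the neighbours of a vertex with index `i` have indices
`i - 1, i, i + 1`, pairwise distinct modulo 3. The colouring is the pullback of the same
colouring of `D_3`, which is checked to be injective by computation, and injective colourings
pull back along neighbourhood-injective homomorphisms. -/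

theorem IsInjColoring.comp_s17 {V W α : Type} {G : SimpleGraph V} {H : SimpleGraph W} {c : W → α}
    (hc : IsInjColoring H c) (f : G →g H) (hf : ∀ w, Set.InjOn f (G.neighborSet w)) :
    IsInjColoring G (c ∘ f) := by
  rintro u v huv ⟨w, hu, hv⟩
  exact hc _ _ (fun h => huv (hf w hu.symm hv.symm h)) ⟨f w, f.map_adj hu, f.map_adj hv⟩

theorem Nat.add_one_mod_eq_or {n r : ℕ} (hn : n < r) :
    (n + 1) % r = n + 1 ∨ (n + 1 = r ∧ (n + 1) % r = 0) := by
  rcases Nat.lt_or_ge (n + 1) r with h | h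
  · exact Or.inl (Nat.mod_eq_of_lt h)
  · have h' : n + 1 = r := by omega
    exact Or.inr ⟨h', by simp [h']⟩

theorem Nat.eq_of_mod_three_eq_of_cyclically_near {r i a b : ℕ} (h3 : 3 ∣ r)
    (hi : i < r) (ha : a < r) (hb : b < r)
    (hia : a = i ∨ a = (i + 1) % r ∨ i = (a + 1) % r)
    (hib : b = i ∨ b = (i + 1) % r ∨ i = (b + 1) % r) (hab : a % 3 = b % 3) : a = b := by
  obtain ⟨k, rfl⟩ := h3
  have := Nat.add_one_mod_eq_or hi
  have := Nat.add_one_mod_eq_or ha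
  have := Nat.add_one_mod_eq_or hb
  omega

namespace genDodec

instance (r : ℕ) : DecidableRel (genDodec r).Adj := fun _ _ => by
  unfold genDodec dodecRel; infer_instance

lemma val_eq_or_of_adj {r : ℕ} {w x : Fin r × Fin 4} (h : (genDodec r).Adj w x) :
    x.1.val = w.1.val ∨ x.1.val = (w.1.val + 1) % r ∨ w.1.val = (x.1.val + 1) % r := by
  obtain ⟨-, h | h⟩ := h <;> simp only [dodecRel, Fin.ext_iff] at h <;> omega

def modThree (r : ℕ) (x : Fin r × Fin 4) : Fin 3 × Fin 4 :=
  (⟨x.1.val % 3, Nat.mod_lt _ (by norm_num)⟩, x.2)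

lemma dodecRel_modThree {r : ℕ} (h3 : 3 ∣ r) {x y : Fin r × Fin 4} (h : dodecRel r x y) :
    dodecRel 3 (modThree r x) (modThree r y) := by
  have succ_mod_three (n : ℕ) : (n + 1) % r % 3 = (n % 3 + 1) % 3 := by
    rw [Nat.mod_mod_of_dvd _ h3]; omega
  simp only [dodecRel, modThree, Fin.ext_iff] at h ⊢
  rcases h with h | h | h | h | h | h <;> simp [h, succ_mod_three]

lemma not_dodecRel_three_self (z : Fin 3 × Fin 4) : ¬ dodecRel 3 z z := by
  unfold dodecRel; omega

def coverThree {r : ℕ} (h3 : 3 ∣ r) : genDodec r →g genDodec 3 where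
  toFun := modThree r
  map_rel' := by
    rintro x y ⟨-, h⟩
    have h' := h.imp (dodecRel_modThree h3) (dodecRel_modThree h3)
    refine ⟨fun heq => ?_, h'⟩
    rw [heq, or_self] at h'
    exact not_dodecRel_three_self _ h'

lemma coverThree_injOn_neighborSet {r : ℕ} (h3 : 3 ∣ r) (w : Fin r × Fin 4) :
    Set.InjOn (coverThree h3) ((genDodec r).neighborSet w) := by
  intro x hx y hy hxy
  simp only [coverThree, modThree, RelHom.coeFn_mk, Prod.mk.injEq, Fin.ext_iff] at hxy
  refine Prod.ext (Fin.ext ?_) (Fin.ext hxy.2)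
  exact Nat.eq_of_mod_three_eq_of_cyclically_near h3 w.1.isLt x.1.isLt y.1.isLt
    (val_eq_or_of_adj hx) (val_eq_or_of_adj hy) hxy.1

def colour (r : ℕ) (x : Fin r × Fin 4) : Fin 3 :=
  ⟨(x.1.val + if x.2.val = 1 ∨ x.2.val = 3 then 0 else 2) % 3, Nat.mod_lt _ (by norm_num)⟩

theorem isInjColoring_colour_three : IsInjColoring (genDodec 3) (colour 3) := by
  unfold IsInjColoring; decide

lemma colour_three_comp_coverThree {r : ℕ} (h3 : 3 ∣ r) :
    colour 3 ∘ coverThree h3 = colour r := by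
  funext x
  exact Fin.ext (Nat.mod_add_mod _ _ _)

end genDodec

/-- For `r ≥ 5` with `3 ∣ r`, assigning colour `i mod 3` to `v_i` and `v'_i`
and colour `(i + 2) mod 3` (the unique colour in `{0,1,2}` different from
`i mod 3` and `(i+1) mod 3`) to `u'_i`, and colouring the `u`-cycle
consistently (`u_i` also gets `(i + 2) mod 3`), yields an injective
3-colouring of the generalised dodecahedron `D_r`. -/
theorem genDodec_explicit_three_coloring (r : ℕ) (hdvd : 3 ∣ r) :
    IsInjColoring (genDodec r)
      (fun x => (⟨(x.1.val + if x.2.val = 1 ∨ x.2.val = 3 then 0 else 2) % 3,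
        Nat.mod_lt _ (by norm_num)⟩ : Fin 3)) := by
  have h := genDodec.isInjColoring_colour_three.comp_s17 (genDodec.coverThree hdvd)
    (genDodec.coverThree_injOn_neighborSet hdvd)
  rwa [genDodec.colour_three_comp_coverThree] at h
end
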